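/- In a monoidal dagger category with duals, for a unitary dagger Frobenius monoid (A, m, u), the abstract dimension of A equals the squared norm of m† ∘ u, i.e. ε_A† ∘ ε_A = u† ∘ m ∘ m† ∘ u; furthermore dim(A) = dim(A)*. -/

import Mathlib

open CategoryTheory MonoidalCategory

namespace QAlg

variable {C : Type*} [Category C] [MonoidalCategory C]

/-- A dagger structure on a category. -/
structure Dagger (C : Type*) [Category C] where
  dag : ∀ {X Y : C}, (X ⟶ Y) → (Y ⟶ X)
  dag_dag : ∀ {X Y : C} (f : X ⟶ Y), dag (dag f) = f
  dag_id : ∀ X : C, dag (𝟙 X) = 𝟙 X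
  dag_comp : ∀ {X Y Z : C} (f : X ⟶ Y) (g : Y ⟶ Z), dag (f ≫ g) = dag g ≫ dag f

/-- A monoidal dagger category: the dagger is monoidal and the coherence
isomorphisms are unitary. -/
structure MonoidalDagger (C : Type*) [Category C] [MonoidalCategory C] extends Dagger C where
  dag_tensorHom : ∀ {W X Y Z : C} (f : W ⟶ X) (g : Y ⟶ Z), dag (f ⊗ₘ g) = dag f ⊗ₘ dag g
  dag_associator : ∀ X Y Z : C, dag (α_ X Y Z).hom = (α_ X Y Z).inv
  dag_leftUnitor : ∀ X : C, dag (λ_ X).hom = (λ_ X).inv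
  dag_rightUnitor : ∀ X : C, dag (ρ_ X).hom = (ρ_ X).inv

/-- A morphism is unitary if its dagger is its inverse. -/
def Dagger.IsUnitary (D : Dagger C) {X Y : C} (f : X ⟶ Y) : Prop :=
  f ≫ D.dag f = 𝟙 X ∧ D.dag f ≫ f = 𝟙 Y

/-- Assigned duals and left/right duality morphisms, compatible with the dagger
(the compatibility equations between the duality morphisms, but *not* yet the
condition `((-)^{*L})† = ((-)†)^{*L}`). -/
structure PreDuals (D : MonoidalDagger C) where
  star : C → C
  ε : ∀ A : C, 𝟙_ C ⟶ star A ⊗ A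
  η : ∀ A : C, A ⊗ star A ⟶ 𝟙_ C
  εR : ∀ A : C, 𝟙_ C ⟶ A ⊗ star A
  ηR : ∀ A : C, star A ⊗ A ⟶ 𝟙_ C
  triangle_left₁ : ∀ A : C,
    (ρ_ A).inv ≫ (A ◁ ε A) ≫ (α_ A (star A) A).inv ≫ (η A ▷ A) ≫ (λ_ A).hom = 𝟙 A
  triangle_left₂ : ∀ A : C,
    (λ_ (star A)).inv ≫ (ε A ▷ star A) ≫ (α_ (star A) A (star A)).hom ≫
      (star A ◁ η A) ≫ (ρ_ (star A)).hom = 𝟙 (star A)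
  triangle_right₁ : ∀ A : C,
    (λ_ A).inv ≫ (εR A ▷ A) ≫ (α_ A (star A) A).hom ≫ (A ◁ ηR A) ≫ (ρ_ A).hom = 𝟙 A
  triangle_right₂ : ∀ A : C,
    (ρ_ (star A)).inv ≫ (star A ◁ εR A) ≫ (α_ (star A) A (star A)).inv ≫
      (ηR A ▷ star A) ≫ (λ_ (star A)).hom = 𝟙 (star A)
  star_star : ∀ A : C, star (star A) = A
  star_tensor : ∀ A B : C, star (A ⊗ B) = star B ⊗ star A
  star_unit : star (𝟙_ C) = 𝟙_ C
  ε_eq_dag_ηR : ∀ A : C, ε A = D.dag (ηR A)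
  η_eq_dag_εR : ∀ A : C, η A = D.dag (εR A)
  ε_eq_dag_η_star : ∀ A : C,
    ε A = D.dag (η (star A)) ≫ (star A ◁ eqToHom (star_star A))
  ε_eq_εR_star : ∀ A : C,
    ε A = εR (star A) ≫ (star A ◁ eqToHom (star_star A))
  η_eq_dag_ε_star : ∀ A : C,
    η A = (eqToHom (star_star A).symm ▷ star A) ≫ D.dag (ε (star A))
  η_eq_ηR_star : ∀ A : C,
    η A = (eqToHom (star_star A).symm ▷ star A) ≫ ηR (star A)

variable {D : MonoidalDagger C}

/-- The left duality functor on morphisms. -/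
def PreDuals.starL (P : PreDuals D) {A B : C} (f : A ⟶ B) : P.star B ⟶ P.star A :=
  (λ_ (P.star B)).inv ≫ (P.ε A ▷ P.star B) ≫ (α_ (P.star A) A (P.star B)).hom ≫
    (P.star A ◁ (f ▷ P.star B)) ≫ (P.star A ◁ P.η B) ≫ (ρ_ (P.star A)).hom

/-- The right duality functor on morphisms. -/
def PreDuals.starR (P : PreDuals D) {A B : C} (f : A ⟶ B) : P.star B ⟶ P.star A :=
  (ρ_ (P.star B)).inv ≫ (P.star B ◁ P.εR A) ≫ (α_ (P.star B) A (P.star A)).inv ≫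
    ((P.star B ◁ f) ▷ P.star A) ≫ (P.ηR B ▷ P.star A) ≫ (λ_ (P.star A)).hom

/-- A monoidal dagger category with duals: additionally `((-)^{*L})† = ((-)†)^{*L}`. -/
structure Duals (D : MonoidalDagger C) extends PreDuals D where
  dag_starL : ∀ {A B : C} (f : A ⟶ B),
    D.dag (toPreDuals.starL f) = toPreDuals.starL (D.dag f)

/-- The conjugation functor `f ↦ f_* = (f^*)† = (f†)^*`. -/
def Duals.conj (P : Duals D) {A B : C} (f : A ⟶ B) : P.star A ⟶ P.star B :=
  D.dag (P.starL f)

/-- The abstract dimension of an object, `ε† ∘ ε`. -/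
def Duals.dim (P : Duals D) (A : C) : 𝟙_ C ⟶ 𝟙_ C :=
  P.ε A ≫ D.dag (P.ε A)

/-- Monoid data on an object. -/
structure MonoidOn (A : C) where
  m : A ⊗ A ⟶ A
  u : 𝟙_ C ⟶ A

/-- The monoid axioms. -/
def MonoidOn.IsMonoid {A : C} (M : MonoidOn A) : Prop :=
  ((M.u ▷ A) ≫ M.m = (λ_ A).hom) ∧ ((A ◁ M.u) ≫ M.m = (ρ_ A).hom) ∧
    ((M.m ▷ A) ≫ M.m = (α_ A A A).hom ≫ (A ◁ M.m) ≫ M.m)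

/-- The dagger Frobenius condition: the adjoint comonoid satisfies the
Frobenius law with the monoid. -/
def MonoidOn.IsDagFrobenius {A : C} (M : MonoidOn A) (D : MonoidalDagger C) : Prop :=
  ((D.dag M.m ▷ A) ≫ (α_ A A A).hom ≫ (A ◁ M.m) = M.m ≫ D.dag M.m) ∧
    ((A ◁ D.dag M.m) ≫ (α_ A A A).inv ≫ (M.m ▷ A) = M.m ≫ D.dag M.m)

/-- The canonical left involution of a dagger Frobenius monoid. -/
def Duals.sL (P : Duals D) {A : C} (M : MonoidOn A) : A ⟶ P.star A :=
  (ρ_ A).inv ≫ (A ◁ (P.ε (P.star A) ≫ (eqToHom (P.star_star A) ▷ P.star A))) ≫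
    (α_ A A (P.star A)).inv ≫ ((M.m ≫ D.dag M.u) ▷ P.star A) ≫ (λ_ (P.star A)).hom

/-- The canonical right involution of a dagger Frobenius monoid. -/
def Duals.sR (P : Duals D) {A : C} (M : MonoidOn A) : A ⟶ P.star A :=
  (λ_ A).inv ≫ (P.ε A ▷ A) ≫ (α_ (P.star A) A A).hom ≫
    (P.star A ◁ (M.m ≫ D.dag M.u)) ≫ (ρ_ (P.star A)).hom

/-- Multiplication of the conjugate monoid on `A*`. -/
def Duals.conjMul (P : Duals D) {A : C} (M : MonoidOn A) : P.star A ⊗ P.star A ⟶ P.star A :=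
  eqToHom (P.star_tensor A A).symm ≫ P.conj M.m

/-- Unit of the conjugate monoid on `A*`. -/
def Duals.conjUnit (P : Duals D) {A : C} (M : MonoidOn A) : 𝟙_ C ⟶ P.star A :=
  eqToHom P.star_unit.symm ≫ P.conj M.u

/-- `s : A ⟶ A*` makes the monoid `M` into an involution monoid: it is a monoid
homomorphism to the conjugate monoid and satisfies `s_* ∘ s = id` (via `A** = A`). -/
def Duals.IsInvolutionMonoid (P : Duals D) {A : C} (M : MonoidOn A) (s : A ⟶ P.star A) : Prop :=
  (M.m ≫ s = (s ⊗ₘ s) ≫ P.conjMul M) ∧ (M.u ≫ s = P.conjUnit M) ∧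
    (s ≫ P.conj s ≫ eqToHom (P.star_star A) = 𝟙 A)

/-- Monoid homomorphism property. -/
def IsMonoidHom {A B : C} (M : MonoidOn A) (N : MonoidOn B) (f : A ⟶ B) : Prop :=
  (M.m ≫ f = (f ⊗ₘ f) ≫ N.m) ∧ (M.u ≫ f = N.u)

/-- The endomorphism monoid `End(A)` on `A* ⊗ A`. -/
def Duals.endM (P : Duals D) (A : C) : MonoidOn (P.star A ⊗ A) where
  m := (α_ (P.star A) A (P.star A ⊗ A)).hom ≫ (P.star A ◁ (α_ A (P.star A) A).inv) ≫
    (P.star A ◁ (P.η A ▷ A)) ≫ (P.star A ◁ (λ_ A).hom)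
  u := P.ε A

/-!
A unitary left involution `s` lets one rewrite the cup `ε_A` through the monoid: since
`η^R_A ∘ (s ⊗ A) = u† ∘ m` and `s` is unitary, taking daggers gives
`ε_A = (s ⊗ A) ∘ m† ∘ u`, and then `ε_A† ε_A = u† m (s† s ⊗ A) m† u = u† m m† u`.
The second claim holds for every scalar: the dual of a scalar is a snake with the scalar
inserted, and since scalars commute (Eckmann–Hilton) it slides out of the snake.
-/

theorem scalar_comm (s t : 𝟙_ C ⟶ 𝟙_ C) : s ≫ t = t ≫ s := by
  have h := whisker_exchange s t
  simp only [id_whiskerLeft, whiskerRight_id, ← unitors_equal, ← unitors_inv_equal,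
    Category.assoc, Iso.inv_hom_id_assoc, cancel_epi] at h
  rw [← cancel_mono (λ_ (𝟙_ C)).inv, Category.assoc, Category.assoc, h]

-- Stated for an `X` only propositionally equal to `𝟙_ C`, such as `P.star (𝟙_ C)`.
theorem snake_whiskerRight_scalar {X : C} (h : X = 𝟙_ C) (e : 𝟙_ C ⟶ X ⊗ 𝟙_ C)
    (n : 𝟙_ C ⊗ X ⟶ 𝟙_ C)
    (snake : (λ_ X).inv ≫ (e ▷ X) ≫ (α_ X (𝟙_ C) X).hom ≫ (X ◁ n) ≫ (ρ_ X).hom = 𝟙 X)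
    (s : 𝟙_ C ⟶ 𝟙_ C) :
    eqToHom h.symm ≫ ((λ_ X).inv ≫ (e ▷ X) ≫ (α_ X (𝟙_ C) X).hom ≫ (X ◁ (s ▷ X)) ≫
      (X ◁ n) ≫ (ρ_ X).hom) ≫ eqToHom h = s := by
  subst h
  simp only [eqToHom_refl, Category.id_comp, Category.comp_id]
  set F := (λ_ _).inv ≫ (e ▷ 𝟙_ C) ≫ (α_ _ _ _).hom ≫ (λ_ _).hom ≫ (ρ_ (𝟙_ C)).hom
  set G := (ρ_ (𝟙_ C)).inv ≫ (λ_ _).inv ≫ (𝟙_ C ◁ n) ≫ (ρ_ (𝟙_ C)).hom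
  have hFG : F ≫ G = 𝟙 _ := by rw [← snake]; simp [F, G]
  calc _ = F ≫ s ≫ G := by
        rw [id_whiskerLeft (s ▷ _), whiskerRight_id s]
        simp only [F, G, Category.assoc]
    _ = s ≫ F ≫ G := by rw [← Category.assoc, scalar_comm F s, Category.assoc]
    _ = s := by rw [hFG, Category.comp_id]

theorem PreDuals.starL_scalar (P : PreDuals D) (s : 𝟙_ C ⟶ 𝟙_ C) :
    eqToHom P.star_unit.symm ≫ P.starL s ≫ eqToHom P.star_unit = s :=
  snake_whiskerRight_scalar P.star_unit (P.ε _) (P.η _) (P.triangle_left₂ _) s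

theorem MonoidalDagger.dag_whiskerRight (D : MonoidalDagger C) {X Y : C} (f : X ⟶ Y) (Z : C) :
    D.dag (f ▷ Z) = D.dag f ▷ Z := by
  rw [← tensorHom_id, D.dag_tensorHom, D.dag_id, tensorHom_id]

theorem PreDuals.εR_eq_ε_star (P : PreDuals D) (A : C) :
    P.εR A = P.ε (P.star A) ≫ (eqToHom (P.star_star A) ▷ P.star A) := by
  rw [P.ε_eq_εR_star]
  simpa using (eqToHom_naturality P.εR (P.star_star A)).symm

def PreDuals.curryR (P : PreDuals D) {A B : C} (φ : B ⊗ A ⟶ 𝟙_ C) : B ⟶ P.star A :=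
  (ρ_ B).inv ≫ (B ◁ P.εR A) ≫ (α_ B A (P.star A)).inv ≫ (φ ▷ P.star A) ≫ (λ_ (P.star A)).hom

theorem PreDuals.curryR_whiskerRight_ηR (P : PreDuals D) {A B : C} (φ : B ⊗ A ⟶ 𝟙_ C) :
    (P.curryR φ ▷ A) ≫ P.ηR A = φ := by
  have slide : ((φ ▷ P.star A) ▷ A) ≫ ((λ_ (P.star A)).hom ▷ A) ≫ P.ηR A
      = (α_ _ _ _).hom ≫ ((B ⊗ A) ◁ P.ηR A) ≫ (ρ_ _).hom ≫ φ := by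
    rw [whiskerRight_tensor_symm_assoc, ← leftUnitor_tensor_hom_assoc, ← leftUnitor_naturality,
      ← whisker_exchange_assoc, unitors_equal, rightUnitor_naturality]
  have snake : ((ρ_ B).inv ▷ A) ≫ ((B ◁ P.εR A) ▷ A) ≫ ((α_ B A (P.star A)).inv ▷ A) ≫
      (α_ _ _ _).hom ≫ ((B ⊗ A) ◁ P.ηR A) ≫ (ρ_ _).hom = 𝟙 _ :=
    calc _ = B ◁ ((λ_ A).inv ≫ (P.εR A ▷ A) ≫ (α_ A (P.star A) A).hom ≫ (A ◁ P.ηR A) ≫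
          (ρ_ A).hom) := by monoidal
      _ = 𝟙 _ := by rw [P.triangle_right₁, whiskerLeft_id]
  simp only [PreDuals.curryR, comp_whiskerRight, Category.assoc, slide]
  slice_lhs 1 6 => rw [snake]
  simp

theorem Duals.sL_eq_curryR (P : Duals D) {A : C} (M : MonoidOn A) :
    P.sL M = P.curryR (M.m ≫ D.dag M.u) := by
  rw [Duals.sL, PreDuals.curryR, P.εR_eq_ε_star]

theorem Duals.sL_whiskerRight_ηR (P : Duals D) {A : C} (M : MonoidOn A) :
    (P.sL M ▷ A) ≫ P.ηR A = M.m ≫ D.dag M.u := by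
  rw [P.sL_eq_curryR]
  exact P.curryR_whiskerRight_ηR _

theorem Duals.ε_eq_of_isUnitary_sL (P : Duals D) {A : C} (M : MonoidOn A)
    (hU : D.IsUnitary (P.sL M)) :
    P.ε A = M.u ≫ D.dag M.m ≫ (P.sL M ▷ A) :=
  calc P.ε A = P.ε A ≫ ((D.dag (P.sL M) ≫ P.sL M) ▷ A) := by
        rw [hU.2, id_whiskerRight, Category.comp_id]
    _ = D.dag ((P.sL M ▷ A) ≫ P.ηR A) ≫ (P.sL M ▷ A) := by
        rw [P.ε_eq_dag_ηR, D.dag_comp, D.dag_whiskerRight, comp_whiskerRight, Category.assoc]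
    _ = M.u ≫ D.dag M.m ≫ (P.sL M ▷ A) := by
        rw [P.sL_whiskerRight_ηR, D.dag_comp, D.dag_dag, Category.assoc]

theorem Duals.dim_eq_of_isUnitary_sL (P : Duals D) {A : C} (M : MonoidOn A)
    (hU : D.IsUnitary (P.sL M)) :
    P.dim A = M.u ≫ D.dag M.m ≫ M.m ≫ D.dag M.u := by
  rw [Duals.dim, P.ε_eq_of_isUnitary_sL M hU]
  simp only [D.dag_comp, D.dag_dag, D.dag_whiskerRight, Category.assoc]
  rw [← comp_whiskerRight_assoc, hU.1, id_whiskerRight, Category.id_comp]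

theorem stmt8 {C : Type*} [Category C] [MonoidalCategory C] {D : MonoidalDagger C}
    (P : Duals D) {A : C} (M : MonoidOn A)
    (hU : D.IsUnitary (P.sL M)) :
    P.dim A = M.u ≫ D.dag M.m ≫ M.m ≫ D.dag M.u ∧
    eqToHom P.star_unit.symm ≫ P.starL (P.dim A) ≫ eqToHom P.star_unit = P.dim A :=
  ⟨P.dim_eq_of_isUnitary_sL M hU, P.starL_scalar _⟩

end QAlg
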